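/- arXiv:2203.02435 — 3 statements merged into one kernel-verified Lean document; each statement's English description precedes it below -/
import Mathlib

section
/- Let a, b be nonnegative integers with (a,b) ≠ (0,0) and a ≠ b, let g lie in a commutative ring with g nilpotent (or work formally), and set v = g·x^a y^b·((b+1)x∂_x − (a+1)y∂_y), a derivation of the formal power series ring A[[x,y]]. Then the automorphism exp(v) acts by x ↦ x(1 + (b−a)g x^a y^b)^{(b+1)/(b−a)} and y ↦ y(1 + (b−a)g x^a y^b)^{(a+1)/(a−b)}, where the fractional powers are interpreted as formal binomial series. -/
open MvPolynomial

/-- The derivation `v = g·x^a y^b·((b+1)x∂_x − (a+1)y∂_y)` acting on `A[x,y]`,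
with `x = X 0`, `y = X 1`. -/
noncomputable def expVee {A : Type*} [CommRing A] [Algebra ℚ A]
    (g : A) (a b : ℕ) (f : MvPolynomial (Fin 2) A) : MvPolynomial (Fin 2) A :=
  C g * X 0 ^ a * X 1 ^ b *
    (((b : MvPolynomial (Fin 2) A) + 1) * (X 0 * pderiv 0 f) -
      ((a : MvPolynomial (Fin 2) A) + 1) * (X 1 * pderiv 1 f))

lemma pd0 {A : Type*} [CommRing A] (c : A) (k l : ℕ) :
    X 0 * pderiv (σ := Fin 2) 0 (C c * X 0 ^ k * X 1 ^ l) =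
      (k : MvPolynomial (Fin 2) A) * (C c * X 0 ^ k * X 1 ^ l) := by
  cases k with
  | zero => simp
  | succ m =>
    simp [pderiv_mul, pderiv_pow, pderiv_X, pderiv_C, Pi.single_apply]
    ring

lemma pd1 {A : Type*} [CommRing A] (c : A) (k l : ℕ) :
    X 1 * pderiv (σ := Fin 2) 1 (C c * X 0 ^ k * X 1 ^ l) =
      (l : MvPolynomial (Fin 2) A) * (C c * X 0 ^ k * X 1 ^ l) := by
  cases l with
  | zero => simp
  | succ m =>
    simp [pderiv_mul, pderiv_pow, pderiv_X, pderiv_C, Pi.single_apply]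
    ring

lemma pderiv_qsmul {A : Type*} [CommRing A] [Algebra ℚ A] (i : Fin 2) (q : ℚ)
    (f : MvPolynomial (Fin 2) A) : pderiv i (q • f) = q • pderiv i f := by
  rw [Algebra.smul_def, Algebra.smul_def,
    show (algebraMap ℚ (MvPolynomial (Fin 2) A)) q = C (algebraMap ℚ A q) from by
      rw [IsScalarTower.algebraMap_apply ℚ A (MvPolynomial (Fin 2) A), algebraMap_eq]]
  simp only [pderiv_mul, pderiv_C, zero_mul, zero_add]

lemma expVee_smul {A : Type*} [CommRing A] [Algebra ℚ A] (g : A) (a b : ℕ) (q : ℚ)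
    (f : MvPolynomial (Fin 2) A) : expVee g a b (q • f) = q • expVee g a b f := by
  unfold expVee
  simp only [pderiv_qsmul, mul_smul_comm, ← smul_sub]

lemma key0 {A : Type*} [CommRing A] [Algebra ℚ A] (g : A) (a b n k l : ℕ) :
    expVee g a b (C g ^ n * X 0 ^ k * X 1 ^ l) =
    ((((b:ℚ)+1) * k - ((a:ℚ)+1) * l)) • (C g ^ (n+1) * X 0 ^ (k+a) * X 1 ^ (l+b)) := by
  unfold expVee
  rw [show (C g : MvPolynomial (Fin 2) A) ^ n = C (g ^ n) by rw [C_pow], pd0, pd1,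
    Algebra.smul_def]
  simp only [algebraMap_eq, map_sub, map_mul, map_add, map_one, map_natCast, map_pow, C_pow]
  ring

/-- `exp(v)` acts by `x ↦ x(1+(b−a)g x^a y^b)^{(b+1)/(b−a)}` and
`y ↦ y(1+(b−a)g x^a y^b)^{(a+1)/(a−b)}`, the fractional powers interpreted as formal
binomial series: stated termwise, the `n`-th term `v^n(x)/n!` of the exponential equals
the `n`-th term `binom((b+1)/(b−a),n)((b−a)g x^a y^b)^n · x` of the binomial series,
i.e. `v^[n](x) = (∏_{m<n} ((b+1)/(b−a) − m))·(b−a)^n • g^n x^{na+1} y^{nb}` (note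
`binom(q,n) = ∏_{m<n}(q−m)/n!`), and similarly for `y`. -/
theorem stmt_1 {A : Type*} [CommRing A] [Algebra ℚ A]
    (g : A) (a b : ℕ) (hab : a ≠ b) (h00 : ¬(a = 0 ∧ b = 0)) (n : ℕ) :
    (expVee g a b)^[n] (X 0) =
      ((∏ m ∈ Finset.range n, (((b : ℚ) + 1) / ((b : ℚ) - (a : ℚ)) - (m : ℚ))) *
          ((b : ℚ) - (a : ℚ)) ^ n) •
        (C g ^ n * X 0 ^ (n * a + 1) * X 1 ^ (n * b)) ∧
    (expVee g a b)^[n] (X 1) =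
      ((∏ m ∈ Finset.range n, (((a : ℚ) + 1) / ((a : ℚ) - (b : ℚ)) - (m : ℚ))) *
          ((b : ℚ) - (a : ℚ)) ^ n) •
        (C g ^ n * X 0 ^ (n * a) * X 1 ^ (n * b + 1)) := by
  have hba : (b : ℚ) - a ≠ 0 := sub_ne_zero.mpr (by exact_mod_cast hab.symm)
  have hab' : (a : ℚ) - b ≠ 0 := sub_ne_zero.mpr (by exact_mod_cast hab)
  induction n with
  | zero => constructor <;> simp
  | succ n ih =>
    obtain ⟨ih0, ih1⟩ := ih
    rw [Function.iterate_succ_apply', Function.iterate_succ_apply', ih0, ih1,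
      expVee_smul, expVee_smul, key0, key0, smul_smul, smul_smul]
    constructor
    · rw [show n*a+1+a = (n+1)*a+1 from by ring, show n*b+b = (n+1)*b from by ring]
      congr 1
      rw [Finset.prod_range_succ]
      field_simp
      push_cast
      ring
    · rw [show n*a+a = (n+1)*a from by ring, show n*b+1+b = (n+1)*b+1 from by ring]
      congr 1
      rw [Finset.prod_range_succ]
      field_simp
      push_cast
      ring
end

section
/- The commutator of the two derivations x^{a_1}⋯x^{a_n}·((a_j+1)x_1∂_{x_1} − (a_1+1)x_j∂_{x_j}) and x^{b_1}⋯x^{b_n}·((b_ℓ+1)x_1∂_{x_1} − (b_1+1)x_ℓ∂_{x_ℓ}) of the polynomial ring ℚ[x_1,…,x_n] equals (∏ x_i^{a_i+b_i})·[((a_j+b_j+1)α + (a_ℓ+b_ℓ+1)β)x_1∂_{x_1} − (a_1+b_1+1)(α x_j∂_{x_j} + β x_ℓ∂_{x_ℓ})], where α = (−(b_ℓ+1)(a_1+1)a_1 + (b_1+1)(a_1+1)a_ℓ)/(a_1+b_1+1) and β = ((a_j+1)(b_1+1)b_1 − (a_1+1)(b_1+1)b_j)/(a_1+b_1+1). In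 particular the ℚ-span of derivations of the form (monomial)·((a_i+1)x_1∂_{x_1} − (a_1+1)x_i∂_{x_i}) is closed under Lie bracket. -/
open MvPolynomial

private lemma pd_comm (m : ℕ) (i k : Fin (m + 1)) (f : MvPolynomial (Fin (m + 1)) ℚ) :
    pderiv i (pderiv k f) = pderiv k (pderiv i f) := by
  induction f using MvPolynomial.induction_on' with
  | monomial s c =>
    rcases eq_or_ne i k with rfl | h
    · rfl
    · simp only [pderiv_monomial]
      have h1 : ((s - Finsupp.single k 1 : Fin (m+1) →₀ ℕ)) i = s i := by
        rw [Finsupp.tsub_apply, Finsupp.single_eq_of_ne' h.symm]; rfl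
      have h2 : ((s - Finsupp.single i 1 : Fin (m+1) →₀ ℕ)) k = s k := by
        rw [Finsupp.tsub_apply, Finsupp.single_eq_of_ne' h]; rfl
      rw [h1, h2, tsub_tsub, tsub_tsub, add_comm (Finsupp.single k 1), mul_right_comm]
  | add p q hp hq => simp only [map_add, hp, hq]

private lemma Xpd_pow (m : ℕ) (i : Fin (m + 1)) (c : ℕ) :
    X i * pderiv i ((X i : MvPolynomial (Fin (m + 1)) ℚ) ^ c) = C (c : ℚ) * X i ^ c := by
  induction c with
  | zero => simp
  | succ d hd =>
    rw [pow_succ, pderiv_mul, pderiv_X_self, mul_one]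
    simp only [Nat.cast_add, Nat.cast_one, map_add, map_one]
    linear_combination (X i) * hd

private lemma Xpd_prod (m : ℕ) (c : Fin (m + 1) → ℕ) (i : Fin (m + 1)) :
    X i * pderiv i (∏ k, (X k : MvPolynomial (Fin (m + 1)) ℚ) ^ c k) =
      C (c i : ℚ) * ∏ k, X k ^ c k := by
  classical
  have key : ∀ s : Finset (Fin (m + 1)), i ∉ s →
      pderiv i (∏ k ∈ s, (X k : MvPolynomial (Fin (m + 1)) ℚ) ^ c k) = 0 := by
    intro s
    induction s using Finset.induction with
    | empty => simp
    | @insert k s hks ih =>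
      intro hi
      have hik : k ≠ i := by rintro rfl; exact hi (Finset.mem_insert_self _ _)
      rw [Finset.prod_insert hks, pderiv_mul, ih (fun h => hi (Finset.mem_insert_of_mem h)),
        pderiv_pow, pderiv_X_of_ne hik]
      ring
  rw [← Finset.mul_prod_erase Finset.univ _ (Finset.mem_univ i), pderiv_mul,
    key _ (Finset.notMem_erase i _)]
  linear_combination (∏ k ∈ Finset.univ.erase i, (X k : MvPolynomial (Fin (m + 1)) ℚ) ^ c k) *
    Xpd_pow m i (c i)

private lemma prod_pow_add (m : ℕ) (a b : Fin (m + 1) → ℕ) :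
    (∏ i, (X i : MvPolynomial (Fin (m + 1)) ℚ) ^ (a i + b i)) =
      (∏ i, X i ^ a i) * ∏ i, X i ^ b i := by
  rw [← Finset.prod_mul_distrib]
  exact Finset.prod_congr rfl fun i _ => pow_add _ _ _

/-- The derivation `x^{a_1}⋯x^{a_n}·((a_j+1)x_1∂_{x_1} − (a_1+1)x_j∂_{x_j})` on
`ℚ[x_1,…,x_{n+1}]`, where `x_1 = X 0`. -/
noncomputable def Dgen (n : ℕ) (a : Fin (n + 1) → ℕ) (j : Fin (n + 1))
    (f : MvPolynomial (Fin (n + 1)) ℚ) : MvPolynomial (Fin (n + 1)) ℚ :=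
  (∏ i, X i ^ a i) *
    (C ((a j : ℚ) + 1) * (X 0 * pderiv 0 f) - C ((a 0 : ℚ) + 1) * (X j * pderiv j f))

noncomputable def alphaVal (n : ℕ) (a b : Fin (n + 1) → ℕ) (l : Fin (n + 1)) : ℚ :=
  (-((b l : ℚ) + 1) * ((a 0 : ℚ) + 1) * (a 0 : ℚ) +
      ((b 0 : ℚ) + 1) * ((a 0 : ℚ) + 1) * (a l : ℚ)) /
    ((a 0 : ℚ) + (b 0 : ℚ) + 1)

noncomputable def betaVal (n : ℕ) (a b : Fin (n + 1) → ℕ) (j : Fin (n + 1)) : ℚ :=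
  (((a j : ℚ) + 1) * ((b 0 : ℚ) + 1) * (b 0 : ℚ) -
      ((a 0 : ℚ) + 1) * ((b 0 : ℚ) + 1) * (b j : ℚ)) /
    ((a 0 : ℚ) + (b 0 : ℚ) + 1)

theorem stmt_3 (n : ℕ) (a b : Fin (n + 1) → ℕ) (j l : Fin (n + 1))
    (hj : j ≠ 0) (hl : l ≠ 0) (f : MvPolynomial (Fin (n + 1)) ℚ) :
    Dgen n a j (Dgen n b l f) - Dgen n b l (Dgen n a j f) =
      (∏ i, X i ^ (a i + b i)) *
        (C (((a j : ℚ) + (b j : ℚ) + 1) * alphaVal n a b l +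
              ((a l : ℚ) + (b l : ℚ) + 1) * betaVal n a b j) * (X 0 * pderiv 0 f) -
          C ((a 0 : ℚ) + (b 0 : ℚ) + 1) *
            (C (alphaVal n a b l) * (X j * pderiv j f) +
              C (betaVal n a b j) * (X l * pderiv l f))) := by
  have hs : (a 0 : ℚ) + (b 0 : ℚ) + 1 ≠ 0 := by positivity
  have hc0 : ((a j : ℚ) + (b j : ℚ) + 1) * alphaVal n a b l +
      ((a l : ℚ) + (b l : ℚ) + 1) * betaVal n a b j =
      ((a j : ℚ) + 1) * ((b l : ℚ) + 1) * ((b 0 : ℚ) - (a 0 : ℚ)) +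
        ((a j : ℚ) + 1) * ((b 0 : ℚ) + 1) * (a l : ℚ) -
        ((a 0 : ℚ) + 1) * ((b l : ℚ) + 1) * (b j : ℚ) := by
    rw [alphaVal, betaVal]; field_simp; ring
  have hα : ((a 0 : ℚ) + (b 0 : ℚ) + 1) * alphaVal n a b l =
      -((b l : ℚ) + 1) * ((a 0 : ℚ) + 1) * (a 0 : ℚ) +
        ((b 0 : ℚ) + 1) * ((a 0 : ℚ) + 1) * (a l : ℚ) := by
    rw [alphaVal]; field_simp
  have hβ : ((a 0 : ℚ) + (b 0 : ℚ) + 1) * betaVal n a b j =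
      ((a j : ℚ) + 1) * ((b 0 : ℚ) + 1) * (b 0 : ℚ) -
        ((a 0 : ℚ) + 1) * ((b 0 : ℚ) + 1) * (b j : ℚ) := by
    rw [betaVal]; field_simp
  have hCαβ : C ((a 0 : ℚ) + (b 0 : ℚ) + 1) *
        (C (alphaVal n a b l) * (X j * pderiv j f) +
          C (betaVal n a b j) * (X l * pderiv l f)) =
      C (-((b l : ℚ) + 1) * ((a 0 : ℚ) + 1) * (a 0 : ℚ) +
          ((b 0 : ℚ) + 1) * ((a 0 : ℚ) + 1) * (a l : ℚ)) * (X j * pderiv j f) +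
        C (((a j : ℚ) + 1) * ((b 0 : ℚ) + 1) * (b 0 : ℚ) -
          ((a 0 : ℚ) + 1) * ((b 0 : ℚ) + 1) * (b j : ℚ)) * (X l * pderiv l f) := by
    rw [← hα, ← hβ, map_mul, map_mul]; ring
  rw [hc0, hCαβ, prod_pow_add]
  have hQ0 := Xpd_prod n b 0
  have hQj := Xpd_prod n b j
  have hP0 := Xpd_prod n a 0
  have hPl := Xpd_prod n a l
  have c1 := pd_comm n j 0 f
  have c2 := pd_comm n l 0 f
  have c3 := pd_comm n l j f
  have e1 : pderiv j (X 0 : MvPolynomial (Fin (n + 1)) ℚ) = 0 := pderiv_X_of_ne hj.symm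
  have e2 : pderiv l (X 0 : MvPolynomial (Fin (n + 1)) ℚ) = 0 := pderiv_X_of_ne hl.symm
  have e3 : pderiv 0 (X j : MvPolynomial (Fin (n + 1)) ℚ) = 0 := pderiv_X_of_ne hj
  have e4 : pderiv 0 (X l : MvPolynomial (Fin (n + 1)) ℚ) = 0 := pderiv_X_of_ne hl
  rcases eq_or_ne j l with rfl | hjl
  · simp only [Dgen, map_sub, pderiv_mul, pderiv_C_mul, pderiv_X_self, e1, e2, e3, e4,
      pderiv_C, pderiv_one, c1, c2, c3, map_add, map_mul, map_sub, map_neg, map_one]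
    linear_combination
      ((∏ i, X i ^ a i) * (C (a j : ℚ) + 1) *
          ((C (b j : ℚ) + 1) * (X 0 * pderiv 0 f) - (C (b 0 : ℚ) + 1) * (X j * pderiv j f))) * hQ0
      - ((∏ i, X i ^ a i) * (C (a 0 : ℚ) + 1) *
          ((C (b j : ℚ) + 1) * (X 0 * pderiv 0 f) - (C (b 0 : ℚ) + 1) * (X j * pderiv j f))) * hQj
      - ((∏ i, X i ^ b i) * (C (b j : ℚ) + 1) *
          ((C (a j : ℚ) + 1) * (X 0 * pderiv 0 f) - (C (a 0 : ℚ) + 1) * (X j * pderiv j f))) * hP0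
      + ((∏ i, X i ^ b i) * (C (b 0 : ℚ) + 1) *
          ((C (a j : ℚ) + 1) * (X 0 * pderiv 0 f) - (C (a 0 : ℚ) + 1) * (X j * pderiv j f))) * hPl
  · have e5 : pderiv j (X l : MvPolynomial (Fin (n + 1)) ℚ) = 0 := pderiv_X_of_ne hjl.symm
    have e6 : pderiv l (X j : MvPolynomial (Fin (n + 1)) ℚ) = 0 := pderiv_X_of_ne hjl
    simp only [Dgen, map_sub, pderiv_mul, pderiv_C_mul, pderiv_X_self, e1, e2, e3, e4, e5, e6,
      pderiv_C, pderiv_one, c1, c2, c3, map_add, map_mul, map_sub, map_neg, map_one]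
    linear_combination
      ((∏ i, X i ^ a i) * (C (a j : ℚ) + 1) *
          ((C (b l : ℚ) + 1) * (X 0 * pderiv 0 f) - (C (b 0 : ℚ) + 1) * (X l * pderiv l f))) * hQ0
      - ((∏ i, X i ^ a i) * (C (a 0 : ℚ) + 1) *
          ((C (b l : ℚ) + 1) * (X 0 * pderiv 0 f) - (C (b 0 : ℚ) + 1) * (X l * pderiv l f))) * hQj
      - ((∏ i, X i ^ b i) * (C (b l : ℚ) + 1) *
          ((C (a j : ℚ) + 1) * (X 0 * pderiv 0 f) - (C (a 0 : ℚ) + 1) * (X j * pderiv j f))) * hP0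
      + ((∏ i, X i ^ b i) * (C (b 0 : ℚ) + 1) *
          ((C (a j : ℚ) + 1) * (X 0 * pderiv 0 f) - (C (a 0 : ℚ) + 1) * (X j * pderiv j f))) * hPl
end

section
/- The vanishing identity underlying wall-crossing cancellation: for nonnegative integers k_1(0), k_2(0), k_1(j), k_2(j) (j = 1,…,h) and rationals a^{\hat Q_j}, b^{\hat Q_j}, c^{\hat Q_j} with a+b+c = 1 for each j, and rationals a^{+r}, b^{+r}, c^{+r}, a^{+s}, b^{+s}, c^{+s} with a^{+r}+b^{+r}+c^{+r} = 1 = a^{+s}+b^{+s}+c^{+s}, the expression E := Σ_j [((k_2(0)+1)k_1(j)(k_1(0)+1)/(k_1(0)+k_1(j)) − (k_1(0)+1)k_2(j))a^{\hat Q_j} − (k_1(0)+1)k_2(j)((k_2(j)−1)/(k_2(0)+k_2(j)))b^{\hat Q_j} − (k_1(0)+1)k_2(j)c^{\hat Q_j}] − (k_2(0)+1)((k_1(0)+1)/(k_1(0)+r))(1+Σ_{i=0}^h k_1(i))a^{+r} + (k_1(0)+1)(1+Σ_{i=0}^h k_2(i))(a^{+s} + ((s−1)/(k_2(0)+s))b^{+s}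 + c^{+s}) vanishes whenever the relation (1+Σ_i k_1(i))/(k_1(0)+r)·a^{+r} + (1+Σ_i k_2(i))/(k_2(0)+s)·b^{+s} = 1 + Σ_j (k_1(j)/(k_1(0)+k_1(j))·a^{\hat Q_j} + k_2(j)/(k_2(0)+k_2(j))·b^{\hat Q_j}) holds (after substituting c = 1 − a − b everywhere). -/
/-!
Once `c = 1 - a - b` is substituted, the `j`-th summand of `E` equals
`(k₁(0)+1)(k₂(0)+1) · (k₁(j)/(k₁(0)+k₁(j)) · a + k₂(j)/(k₂(0)+k₂(j)) · b) - (k₁(0)+1) k₂(j)`,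
and the `s`-bracket equals `1 - (k₂(0)+1)/(k₂(0)+s) · b^{+s}`. After these two rewrites `E` is
`(k₁(0)+1)(k₂(0)+1)` times the difference of the two sides of the relation.
-/

open Finset

variable {K : Type*} [Field K]

/-- No positivity is needed: if `m + n = 0` then `n = 0` and both sides vanish. -/
lemma natCast_mul_one_sub_div_add [CharZero K] (m n : ℕ) :
    (n : K) * (1 - ((n : K) - 1) / ((m : K) + n)) = n * ((m : K) + 1) / ((m : K) + n) := by
  rcases n.eq_zero_or_pos with rfl | hn
  · simp
  · have : (m : K) + n ≠ 0 := by exact_mod_cast (by omega : m + n ≠ 0)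
    field_simp
    ring

lemma wallCrossing_summand_eq [CharZero K] (k10 k20 k1 k2 : ℕ) {a b c : K}
    (habc : a + b + c = 1) :
    (((k20 : K) + 1) * k1 * ((k10 : K) + 1) / ((k10 : K) + k1) - ((k10 : K) + 1) * k2) * a -
        ((k10 : K) + 1) * k2 * (((k2 : K) - 1) / ((k20 : K) + k2)) * b -
        ((k10 : K) + 1) * k2 * c =
      ((k10 : K) + 1) * ((k20 : K) + 1) * ((k1 : K) / ((k10 : K) + k1) * a +
        (k2 : K) / ((k20 : K) + k2) * b) - ((k10 : K) + 1) * k2 := by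
  linear_combination (-((k10 : K) + 1) * k2) * habc +
    ((k10 : K) + 1) * b * natCast_mul_one_sub_div_add (K := K) k20 k2

lemma add_div_mul_add_eq_one_sub {x y a b c : K} (hxy : x + y ≠ 0) (habc : a + b + c = 1) :
    a + (y - 1) / (x + y) * b + c = 1 - (x + 1) / (x + y) * b := by
  rw [show c = 1 - a - b by linear_combination habc]
  field_simp
  ring

theorem stmt_14_general (r s : ℕ) (hs : 2 ≤ s) (h : ℕ)
    (k10 k20 : ℕ) (k1 k2 : Fin h → ℕ)
    (aQ bQ cQ : Fin h → ℚ) (hQ : ∀ j, aQ j + bQ j + cQ j = 1)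
    (ar asv bsv csv : ℚ)
    (hsum_s : asv + bsv + csv = 1)
    (hrel :
      (1 + ((k10 : ℚ) + ∑ j, (k1 j : ℚ))) / ((k10 : ℚ) + (r : ℚ)) * ar +
          (1 + ((k20 : ℚ) + ∑ j, (k2 j : ℚ))) / ((k20 : ℚ) + (s : ℚ)) * bsv =
        1 + ∑ j, ((k1 j : ℚ) / ((k10 : ℚ) + (k1 j : ℚ)) * aQ j +
          (k2 j : ℚ) / ((k20 : ℚ) + (k2 j : ℚ)) * bQ j)) :
    (∑ j, ((((k20 : ℚ) + 1) * (k1 j : ℚ) * ((k10 : ℚ) + 1) / ((k10 : ℚ) + (k1 j : ℚ)) -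
            ((k10 : ℚ) + 1) * (k2 j : ℚ)) * aQ j -
          ((k10 : ℚ) + 1) * (k2 j : ℚ) * (((k2 j : ℚ) - 1) / ((k20 : ℚ) + (k2 j : ℚ))) * bQ j -
          ((k10 : ℚ) + 1) * (k2 j : ℚ) * cQ j)) -
        ((k20 : ℚ) + 1) * (((k10 : ℚ) + 1) / ((k10 : ℚ) + (r : ℚ))) *
          (1 + ((k10 : ℚ) + ∑ j, (k1 j : ℚ))) * ar +
        ((k10 : ℚ) + 1) * (1 + ((k20 : ℚ) + ∑ j, (k2 j : ℚ))) *
          (asv + (((s : ℚ) - 1) / ((k20 : ℚ) + (s : ℚ))) * bsv + csv) = 0 := by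
  have hks : (k20 : ℚ) + s ≠ 0 := by
    have : (0 : ℚ) < s := by exact_mod_cast (by omega : 0 < s)
    positivity
  rw [sum_congr rfl fun j _ => wallCrossing_summand_eq k10 k20 (k1 j) (k2 j) (hQ j),
    sum_sub_distrib, ← mul_sum, ← mul_sum, add_div_mul_add_eq_one_sub hks hsum_s]
  linear_combination (-(((k10 : ℚ) + 1) * ((k20 : ℚ) + 1))) * hrel

theorem stmt_14 (r s : ℕ) (hr : 2 ≤ r) (hs : 2 ≤ s) (h : ℕ)
    (k10 k20 : ℕ) (k1 k2 : Fin h → ℕ)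
    (hden1 : ∀ j, 0 < k10 + k1 j) (hden2 : ∀ j, 0 < k20 + k2 j)
    (aQ bQ cQ : Fin h → ℚ) (hQ : ∀ j, aQ j + bQ j + cQ j = 1)
    (ar br cr asv bsv csv : ℚ)
    (hsum_r : ar + br + cr = 1) (hsum_s : asv + bsv + csv = 1)
    (hrel :
      (1 + ((k10 : ℚ) + ∑ j, (k1 j : ℚ))) / ((k10 : ℚ) + (r : ℚ)) * ar +
          (1 + ((k20 : ℚ) + ∑ j, (k2 j : ℚ))) / ((k20 : ℚ) + (s : ℚ)) * bsv =
        1 + ∑ j, ((k1 j : ℚ) / ((k10 : ℚ) + (k1 j : ℚ)) * aQ j +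
          (k2 j : ℚ) / ((k20 : ℚ) + (k2 j : ℚ)) * bQ j)) :
    (∑ j, ((((k20 : ℚ) + 1) * (k1 j : ℚ) * ((k10 : ℚ) + 1) / ((k10 : ℚ) + (k1 j : ℚ)) -
            ((k10 : ℚ) + 1) * (k2 j : ℚ)) * aQ j -
          ((k10 : ℚ) + 1) * (k2 j : ℚ) * (((k2 j : ℚ) - 1) / ((k20 : ℚ) + (k2 j : ℚ))) * bQ j -
          ((k10 : ℚ) + 1) * (k2 j : ℚ) * cQ j)) -
        ((k20 : ℚ) + 1) * (((k10 : ℚ) + 1) / ((k10 : ℚ) + (r : ℚ))) *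
          (1 + ((k10 : ℚ) + ∑ j, (k1 j : ℚ))) * ar +
        ((k10 : ℚ) + 1) * (1 + ((k20 : ℚ) + ∑ j, (k2 j : ℚ))) *
          (asv + (((s : ℚ) - 1) / ((k20 : ℚ) + (s : ℚ))) * bsv + csv) = 0 :=
  stmt_14_general r s hs h k10 k20 k1 k2 aQ bQ cQ hQ ar asv bsv csv hsum_s hrel
end
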